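/- For the slicer map S_α with α ∈ (0,2), the coarse-grained distribution has heavy tails: there exist constants c, C > 0 such that for all n and all j with 1 ≪ |j| < n of the correct parity, c |j|^{−(α+1)} ≤ ρ^G_n(j) ≤ C |j|^{−(α+1)}; more precisely ρ^G_n(j) · |j|^{α+1} → 2α as |j| → ∞ (with |j| < n of matching parity). Moreover ρ^G_n(±n) = (n−1+2^{1/α})^{−α} ∼ n^{−α}. -/

import Mathlib

/-! For `2 ≤ |j| < n` of the right parity, `A_j = f(|j| - 1) - f(|j| + 1)` with
`f t = (t + 2^{1/α})^{-α}`. By the mean value theorem this central difference lies between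
`2α (|j| + 1 + 2^{1/α})^{-(α+1)}` and `2α (|j| - 1 + 2^{1/α})^{-(α+1)}`, and both bounds are
`∼ 2α |j|^{-(α+1)}`. The two-sided bounds are this limit read with tolerance `ε = α`. -/

open Filter

noncomputable def ella (α : ℝ) (m : ℤ) : ℝ :=
  (((|m| : ℤ) : ℝ) + (2:ℝ) ^ (1/α)) ^ (-α)

/-- The coarse-grained distribution of the slicer map `S_α` at time `n`:
`A_{±n} = ℓ_{n-1}`, `A_j = ℓ_{|j|-1} - ℓ_{|j|+1}` for `0 < |j| < n` with
`j ≡ n (mod 2)`, `A_0 = 2(ℓ_0 - ℓ_1)` for even `n`, and `A_j = 0` otherwise. -/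
noncomputable def Acg (α : ℝ) (n : ℕ) (j : ℤ) : ℝ :=
  if |j| = (n:ℤ) then ella α ((n:ℤ) - 1)
  else if j = 0 ∧ Even n then 2 * (ella α 0 - ella α 1)
  else if 0 < |j| ∧ |j| < (n:ℤ) ∧ j % 2 = (n:ℤ) % 2 then
    ella α (|j| - 1) - ella α (|j| + 1)
  else 0

/-- The mean square displacement (`p = 2`) and more generally the `p`-th moment of
the coarse-grained distribution. -/
noncomputable def momentCG (α : ℝ) (p : ℕ) (n : ℕ) : ℝ :=
  ∑ j ∈ Finset.Icc (-(n:ℤ)) (n:ℤ), Acg α n j * (j:ℝ) ^ p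

lemma rpow_neg_sub_rpow_neg_mem_Icc {α a b : ℝ} (hα : 0 < α) (ha : 0 < a) (hab : a < b) :
    a ^ (-α) - b ^ (-α) ∈ Set.Icc (α * (b - a) / b ^ (α + 1)) (α * (b - a) / a ^ (α + 1)) := by
  obtain ⟨ξ, hξ, hslope⟩ := exists_hasDerivAt_eq_slope (fun t : ℝ => t ^ (-α))
    (fun t => -α * t ^ (-α - 1)) hab
    (fun t ht => (Real.continuousAt_rpow_const t (-α)
      (Or.inl (ha.trans_le ht.1).ne')).continuousWithinAt)
    (fun t ht => Real.hasDerivAt_rpow_const (Or.inl (ha.trans ht.1).ne'))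
  have hξ0 : 0 < ξ := ha.trans hξ.1
  have hmvt : a ^ (-α) - b ^ (-α) = α * (b - a) / ξ ^ (α + 1) := by
    rw [eq_div_iff (sub_ne_zero.mpr hab.ne'), show -α - 1 = -(α + 1) by ring,
      Real.rpow_neg hξ0.le] at hslope
    rw [div_eq_mul_inv]
    linear_combination hslope
  have hba : 0 ≤ α * (b - a) := mul_nonneg hα.le (sub_nonneg.mpr hab.le)
  rw [hmvt]
  exact ⟨div_le_div_of_nonneg_left hba (by positivity)
      (Real.rpow_le_rpow hξ0.le hξ.2.le (by linarith)),
    div_le_div_of_nonneg_left hba (by positivity)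
      (Real.rpow_le_rpow ha.le hξ.1.le (by linarith))⟩

lemma tendsto_div_add_const_rpow_atTop (c p : ℝ) :
    Tendsto (fun x : ℝ => (x / (x + c)) ^ p) atTop (nhds 1) := by
  have hdiv : Tendsto (fun x : ℝ => x / (x + c)) atTop (nhds 1) := by
    have h : Tendsto (fun x : ℝ => 1 - c / (x + c)) atTop (nhds (1 - 0)) :=
      tendsto_const_nhds.sub (tendsto_const_nhds.div_atTop
        (tendsto_atTop_add_const_right _ c tendsto_id))
    refine (sub_zero (1 : ℝ) ▸ h).congr' ?_
    filter_upwards [eventually_gt_atTop (-c)] with x hx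
    have : x + c ≠ 0 := by linarith
    field_simp
    ring
  simpa using hdiv.rpow_const (Or.inl one_ne_zero)

lemma tendsto_rpow_neg_mul_rpow_atTop (c p : ℝ) :
    Tendsto (fun x : ℝ => (x + c) ^ (-p) * x ^ p) atTop (nhds 1) := by
  refine (tendsto_div_add_const_rpow_atTop c p).congr' ?_
  filter_upwards [eventually_gt_atTop 0, eventually_gt_atTop (-c)] with x hx hxc
  have hy : 0 ≤ x + c := by linarith
  rw [Real.div_rpow hx.le hy, Real.rpow_neg hy, div_eq_inv_mul]

lemma tendsto_rpow_neg_sub_rpow_neg_mul_rpow_atTop {α : ℝ} (hα : 0 < α) (c : ℝ) :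
    Tendsto (fun x : ℝ => ((x - 1 + c) ^ (-α) - (x + 1 + c) ^ (-α)) * x ^ (α + 1))
      atTop (nhds (2 * α)) := by
  have hlim (d : ℝ) : Tendsto (fun x : ℝ => 2 * α * (x / (x + d)) ^ (α + 1))
      atTop (nhds (2 * α)) := by
    simpa using (tendsto_div_add_const_rpow_atTop d (α + 1)).const_mul (2 * α)
  refine tendsto_of_tendsto_of_tendsto_of_le_of_le' (hlim (1 + c)) (hlim (-1 + c)) ?_ ?_
  · filter_upwards [eventually_gt_atTop 0, eventually_gt_atTop (1 - c)] with x hx hxc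
    have hy : 0 < x - 1 + c := by linarith
    have hmvt := (rpow_neg_sub_rpow_neg_mem_Icc hα hy (by linarith : x - 1 + c < x + 1 + c)).1
    calc 2 * α * (x / (x + (1 + c))) ^ (α + 1)
        = α * (x + 1 + c - (x - 1 + c)) / (x + 1 + c) ^ (α + 1) * x ^ (α + 1) := by
          rw [Real.div_rpow hx.le (by linarith)]; ring_nf
      _ ≤ _ := mul_le_mul_of_nonneg_right hmvt (Real.rpow_nonneg hx.le _)
  · filter_upwards [eventually_gt_atTop 0, eventually_gt_atTop (1 - c)] with x hx hxc
    have hy : 0 < x - 1 + c := by linarith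
    have hmvt := (rpow_neg_sub_rpow_neg_mem_Icc hα hy (by linarith : x - 1 + c < x + 1 + c)).2
    calc _ ≤ α * (x + 1 + c - (x - 1 + c)) / (x - 1 + c) ^ (α + 1) * x ^ (α + 1) :=
          mul_le_mul_of_nonneg_right hmvt (Real.rpow_nonneg hx.le _)
      _ = 2 * α * (x / (x + (-1 + c))) ^ (α + 1) := by
          rw [Real.div_rpow hx.le (by linarith)]; ring_nf

lemma mem_Icc_of_abs_mul_rpow_sub_lt {a m p L ε : ℝ} (hm : 0 < m)
    (h : |a * m ^ p - L| < ε) : a ∈ Set.Icc ((L - ε) * m ^ (-p)) ((L + ε) * m ^ (-p)) := by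
  have ha : a = a * m ^ p * m ^ (-p) := by
    rw [mul_assoc, ← Real.rpow_add hm, add_neg_cancel, Real.rpow_zero, mul_one]
  have hmp : 0 ≤ m ^ (-p) := Real.rpow_nonneg hm.le _
  obtain ⟨hlo, hhi⟩ := abs_sub_lt_iff.mp h
  constructor
  · rw [ha]
    exact mul_le_mul_of_nonneg_right (by linarith) hmp
  · rw [ha]
    exact mul_le_mul_of_nonneg_right (by linarith) hmp

lemma Acg_of_two_le_abs {α : ℝ} {n : ℕ} {j : ℤ} (h2 : 2 ≤ |j|) (hlt : |j| < (n:ℤ))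
    (hpar : j % 2 = (n:ℤ) % 2) :
    Acg α n j = (((|j| : ℤ) : ℝ) - 1 + (2:ℝ) ^ (1/α)) ^ (-α)
      - (((|j| : ℤ) : ℝ) + 1 + (2:ℝ) ^ (1/α)) ^ (-α) := by
  have hj0 : ¬(j = 0 ∧ Even n) := by rintro ⟨rfl, -⟩; simp at h2
  rw [Acg, if_neg hlt.ne, if_neg hj0, if_pos ⟨by omega, hlt, hpar⟩, ella, ella,
    abs_of_nonneg (by omega : (0:ℤ) ≤ |j| - 1), abs_of_nonneg (by omega : (0:ℤ) ≤ |j| + 1)]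
  push_cast
  ring_nf

lemma Acg_of_abs_eq {α : ℝ} {n : ℕ} (hn : 1 ≤ n) {j : ℤ} (hj : |j| = n) :
    Acg α n j = ((n:ℝ) - 1 + (2:ℝ) ^ (1/α)) ^ (-α) := by
  rw [Acg, if_pos hj, ella, abs_of_nonneg (by omega : (0:ℤ) ≤ n - 1)]
  push_cast
  rfl

lemma exists_forall_abs_Acg_mul_rpow_sub_lt {α : ℝ} (hα : 0 < α) {ε : ℝ} (hε : 0 < ε) :
    ∃ J : ℤ, ∀ n : ℕ, ∀ j : ℤ, J ≤ |j| → |j| < (n:ℤ) → j % 2 = (n:ℤ) % 2 →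
      |Acg α n j * ((|j| : ℤ) : ℝ) ^ (α + 1) - 2 * α| < ε := by
  obtain ⟨J, hJ⟩ := Metric.tendsto_atTop.mp
    ((tendsto_rpow_neg_sub_rpow_neg_mul_rpow_atTop hα _).comp tendsto_intCast_atTop_atTop) ε hε
  refine ⟨max J 2, fun n j hj hlt hpar => ?_⟩
  rw [Acg_of_two_le_abs (le_of_max_le_right hj) hlt hpar]
  exact hJ |j| (le_of_max_le_left hj)

lemma tendsto_Acg_natCast_mul_rpow {α : ℝ} :
    Tendsto (fun n : ℕ => Acg α n (n:ℤ) * (n:ℝ) ^ α) atTop (nhds 1) := by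
  refine ((tendsto_rpow_neg_mul_rpow_atTop (-1 + 2 ^ (1 / α)) α).comp
    tendsto_natCast_atTop_atTop).congr' ?_
  filter_upwards [eventually_ge_atTop 1] with n hn
  rw [Function.comp_apply, Acg_of_abs_eq hn (abs_of_nonneg n.cast_nonneg)]
  ring_nf

/-- heavy tails of the coarse-grained distribution `ρ^G_n(j) = A_j`:
two-sided bounds `c|j|^{-(α+1)} ≤ ρ^G_n(j) ≤ C|j|^{-(α+1)}` for large `|j| < n` of the
correct parity; more precisely `ρ^G_n(j)·|j|^{α+1} → 2α` as `|j| → ∞` (uniformly in `n`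
with `|j| < n` of matching parity); and `ρ^G_n(±n) = (n-1+2^{1/α})^{-α} ∼ n^{-α}`. -/
theorem heavy_tails (α : ℝ) (hα : α ∈ Set.Ioo (0:ℝ) 2) :
    (∃ c C : ℝ, 0 < c ∧ 0 < C ∧ ∃ J : ℤ, ∀ n : ℕ, ∀ j : ℤ,
        J ≤ |j| → |j| < (n:ℤ) → j % 2 = (n:ℤ) % 2 →
        c * ((|j| : ℤ) : ℝ) ^ (-(α + 1)) ≤ Acg α n j ∧
        Acg α n j ≤ C * ((|j| : ℤ) : ℝ) ^ (-(α + 1))) ∧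
    (∀ ε : ℝ, 0 < ε → ∃ J : ℤ, ∀ n : ℕ, ∀ j : ℤ,
        J ≤ |j| → |j| < (n:ℤ) → j % 2 = (n:ℤ) % 2 →
        |Acg α n j * ((|j| : ℤ) : ℝ) ^ (α + 1) - 2 * α| < ε) ∧
    (∀ n : ℕ, 1 ≤ n →
        Acg α n (n:ℤ) = ((n:ℝ) - 1 + (2:ℝ)^(1/α)) ^ (-α) ∧
        Acg α n (-(n:ℤ)) = ((n:ℝ) - 1 + (2:ℝ)^(1/α)) ^ (-α)) ∧
    Tendsto (fun n : ℕ => Acg α n (n:ℤ) * (n:ℝ)^α) atTop (nhds 1) := by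
  have hα0 : 0 < α := hα.1
  refine ⟨?_, fun ε hε => exists_forall_abs_Acg_mul_rpow_sub_lt hα0 hε,
    fun n hn => ⟨Acg_of_abs_eq hn (by simp), Acg_of_abs_eq hn (by simp)⟩,
    tendsto_Acg_natCast_mul_rpow⟩
  obtain ⟨J, hJ⟩ := exists_forall_abs_Acg_mul_rpow_sub_lt hα0 hα0
  refine ⟨α, 3 * α, hα0, by linarith, max J 1, fun n j hj hlt hpar => ?_⟩
  have hj0 : (0:ℝ) < ((|j| : ℤ) : ℝ) := by exact_mod_cast (le_of_max_le_right hj : 1 ≤ |j|)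
  have h := mem_Icc_of_abs_mul_rpow_sub_lt hj0 (hJ n j (le_of_max_le_left hj) hlt hpar)
  exact ⟨by linarith [h.1], by linarith [h.2]⟩
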